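/- arXiv:1505.02325 — 3 statements merged into one kernel-verified Lean document; each statement's English description precedes it below -/
import Mathlib

section
/- Uniqueness of the picker's equilibrium strategy: in a non-degenerate 'ordinary' Capped-Guesses game, i.e., one where additionally λK + ∑_{j=1}^{J-1}C_j|E_j| > C_J∑_{j=1}^{J-1}|E_j| holds strictly, every picker mixed strategy δ* that is part of a Nash equilibrium equals the uniform distribution on ∪_{i=1}^{J} E_i. -/
open Finset

noncomputable section

variable {P : Type*} [Fintype P] [DecidableEq P] {N : ℕ}

/-- The usability cost `c(d)`: `C i` for the unique partition `E i` containing `d`. -/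
def cost (E : Fin N → Finset P) (C : Fin N → ℝ) (d : P) : ℝ :=
  ∑ i, if d ∈ E i then C i else 0

/-- Picker's pure utility `u_D(d,A) = -c(d) - λ·1_A(d)`. -/
def uD (E : Fin N → Finset P) (C : Fin N → ℝ) (lam : ℝ) (d : P) (A : Finset P) : ℝ :=
  -cost E C d - lam * (if d ∈ A then 1 else 0)

/-- Guesser's pure utility `u_A(d,A) = γ·1_A(d)`. -/
def uA (gam : ℝ) (d : P) (A : Finset P) : ℝ :=
  gam * (if d ∈ A then 1 else 0)

/-- Mixed picker strategies: probability distributions on `P`. -/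
def simplexP (P : Type*) [Fintype P] : Set (P → ℝ) :=
  {δ | (∀ p, 0 ≤ δ p) ∧ ∑ p, δ p = 1}

/-- Guesser pure strategies: subsets of `P` of size `K`. -/
def GA (P : Type*) [Fintype P] [DecidableEq P] (K : ℕ) := {A : Finset P // A.card = K}

instance (K : ℕ) : Fintype (GA P K) := by unfold GA; infer_instance

/-- Mixed guesser strategies: probability distributions on `GA P K`. -/
def simplexA (P : Type*) [Fintype P] [DecidableEq P] (K : ℕ) : Set (GA P K → ℝ) :=
  {α | (∀ A, 0 ≤ α A) ∧ ∑ A, α A = 1}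

/-- Picker's expected utility. -/
def UD (E : Fin N → Finset P) (C : Fin N → ℝ) (lam : ℝ) (K : ℕ)
    (δ : P → ℝ) (α : GA P K → ℝ) : ℝ :=
  ∑ d, ∑ A : GA P K, δ d * α A * uD E C lam d A.1

/-- Guesser's expected utility. -/
def UA (gam : ℝ) (K : ℕ) (δ : P → ℝ) (α : GA P K → ℝ) : ℝ :=
  ∑ d, ∑ A : GA P K, δ d * α A * uA gam d A.1

/-- Mixed Nash equilibrium. -/
def IsNE (E : Fin N → Finset P) (C : Fin N → ℝ) (lam gam : ℝ) (K : ℕ)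
    (δ : P → ℝ) (α : GA P K → ℝ) : Prop :=
  δ ∈ simplexP P ∧ α ∈ simplexA P K ∧
    (∀ δ' ∈ simplexP P, UD E C lam K δ' α ≤ UD E C lam K δ α) ∧
    (∀ α' ∈ simplexA P K, UA gam K δ α' ≤ UA gam K δ α)

/-- Standing hypotheses of the Capped-Guesses game. -/
structure CappedHyp (P : Type*) [Fintype P] [DecidableEq P] {N : ℕ}
    (E : Fin N → Finset P) (C : Fin N → ℝ) (lam gam : ℝ) (K : ℕ) : Prop where
  hN : 0 < N
  nonemp : ∀ i, (E i).Nonempty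
  disj : ∀ i j, i ≠ j → Disjoint (E i) (E j)
  cover : ∀ p : P, ∃ i, p ∈ E i
  C_nonneg : 0 ≤ C ⟨0, hN⟩
  C_mono : StrictMono C
  lam_pos : 0 < lam
  gam_pos : 0 < gam
  K_pos : 0 < K
  K_lt : K < Fintype.card P

open Classical in
/-- The set `𝒥 = {j : L < j ≤ N, λK + ∑_{i<j}C_i|E_i| ≥ C_j ∑_{i<j}|E_i|}`; note that
`L < j` is equivalent to `K < ∑_{i<j}|E_i|`. -/
def Jset (E : Fin N → Finset P) (C : Fin N → ℝ) (lam : ℝ) (K : ℕ) : Finset (Fin N) :=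
  univ.filter (fun j =>
    K < ∑ i ∈ univ.filter (· < j), (E i).card ∧
    C j * (∑ i ∈ univ.filter (· < j), ((E i).card : ℝ)) ≤
      lam * K + ∑ i ∈ univ.filter (· < j), C i * ((E i).card : ℝ))

/-- `J = max 𝒥` (an arbitrary default when `𝒥 = ∅`). -/
def Jidx (E : Fin N → Finset P) (C : Fin N → ℝ) (lam : ℝ) (K : ℕ) (hN : 0 < N) : Fin N :=
  if h : (Jset E C lam K).Nonempty then (Jset E C lam K).max' h else ⟨0, hN⟩

/-- `∑_{i=1}^{J}|E_i|`. -/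
def Ssum (E : Fin N → Finset P) (J : Fin N) : ℝ :=
  ∑ i ∈ univ.filter (· ≤ J), ((E i).card : ℝ)

/-- `∑_{i=1}^{J}C_i|E_i|`. -/
def CSsum (E : Fin N → Finset P) (C : Fin N → ℝ) (J : Fin N) : ℝ :=
  ∑ i ∈ univ.filter (· ≤ J), C i * ((E i).card : ℝ)

/-- The game is "ordinary": `𝒥 ≠ ∅` and `C_1 + λ > (∑_{i≤J}C_i|E_i| + λK)/∑_{i≤J}|E_i|`. -/
def Ordinary (E : Fin N → Finset P) (C : Fin N → ℝ) (lam : ℝ) (K : ℕ) (hN : 0 < N) : Prop :=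
  (Jset E C lam K).Nonempty ∧
    (CSsum E C (Jidx E C lam K hN) + lam * K) / Ssum E (Jidx E C lam K hN) < C ⟨0, hN⟩ + lam

/-- The marginal probability `ρ(p)` that secret `p` is among the guesser's `K` guesses. -/
def marg (K : ℕ) (α : GA P K → ℝ) (p : P) : ℝ :=
  ∑ A : GA P K, if p ∈ A.1 then α A else 0

set_option linter.unusedSectionVars false
section AuxLemmas

variable {P : Type*} [Fintype P] [DecidableEq P] {N : ℕ}

lemma cost_eq (E : Fin N → Finset P) (C : Fin N → ℝ)
    (hdisj : ∀ i j, i ≠ j → Disjoint (E i) (E j)) {p : P} {i : Fin N} (hp : p ∈ E i) :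
    cost E C p = C i := by
  unfold cost
  rw [Finset.sum_eq_single i]
  · simp [hp]
  · intro j _ hj
    have hnot : p ∉ E j := fun hpj => (Finset.disjoint_left.mp (hdisj j i hj)) hpj hp
    simp [hnot]
  · intro hi; exact absurd (Finset.mem_univ i) hi

lemma UD_eq (E : Fin N → Finset P) (C : Fin N → ℝ) (lam : ℝ) (K : ℕ)
    (δ : P → ℝ) (α : GA P K → ℝ) (hα : ∑ A : GA P K, α A = 1) :
    UD E C lam K δ α = ∑ d, δ d * (-(cost E C d) - lam * marg K α d) := by
  unfold UD marg
  refine Finset.sum_congr rfl fun d _ => ?_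
  have key : ∀ A : GA P K, δ d * α A * uD E C lam d A.1
      = δ d * (-(cost E C d)) * α A - δ d * lam * (if d ∈ A.1 then α A else 0) := by
    intro A; unfold uD; split <;> ring
  rw [Finset.sum_congr rfl fun A _ => key A, Finset.sum_sub_distrib, ← Finset.mul_sum,
    ← Finset.mul_sum, hα]
  ring

lemma UA_eq (gam : ℝ) (K : ℕ) (δ : P → ℝ) (α : GA P K → ℝ) :
    UA gam K δ α = gam * ∑ A : GA P K, α A * ∑ p ∈ A.1, δ p := by
  unfold UA uA
  rw [Finset.sum_comm, Finset.mul_sum]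
  refine Finset.sum_congr rfl fun A _ => ?_
  have key : ∀ d : P, δ d * α A * (gam * (if d ∈ A.1 then 1 else 0))
      = if d ∈ A.1 then gam * (α A * δ d) else 0 := by
    intro d; split <;> ring
  rw [Finset.sum_congr rfl fun d _ => key d, Finset.sum_ite_mem, Finset.univ_inter,
    ← Finset.mul_sum, ← Finset.mul_sum]

lemma marg_sum (K : ℕ) (α : GA P K → ℝ) (hα : ∑ A : GA P K, α A = 1) :
    ∑ p, marg K α p = K := by
  unfold marg
  rw [Finset.sum_comm]
  have key : ∀ A : GA P K, (∑ p, if p ∈ A.1 then α A else 0) = (K : ℝ) * α A := by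
    intro A
    rw [Finset.sum_ite_mem, Finset.univ_inter, Finset.sum_const, A.2, nsmul_eq_mul]
  rw [Finset.sum_congr rfl fun A _ => key A, ← Finset.mul_sum, hα, mul_one]

lemma marg_nonneg (K : ℕ) (α : GA P K → ℝ) (hα : ∀ A, 0 ≤ α A) (p : P) :
    0 ≤ marg K α p := by
  unfold marg
  refine Finset.sum_nonneg fun A _ => ?_
  split
  · exact hα A
  · exact le_refl 0

lemma marg_le_one (K : ℕ) (α : GA P K → ℝ) (hα0 : ∀ A, 0 ≤ α A)
    (hα : ∑ A : GA P K, α A = 1) (p : P) : marg K α p ≤ 1 := by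
  unfold marg
  rw [← hα]
  refine Finset.sum_le_sum fun A _ => ?_
  split
  · exact le_refl _
  · exact hα0 A

/-- swap lemma: replace `p ∈ A` by `q ∉ A` -/
lemma swap_set (K : ℕ) (A : GA P K) {p q : P} (hp : p ∈ A.1) (hq : q ∉ A.1) (δ : P → ℝ) :
    ∃ A' : GA P K, ∑ x ∈ A'.1, δ x = (∑ x ∈ A.1, δ x) - δ p + δ q := by
  have hqe : q ∉ A.1.erase p := fun hc => hq (Finset.mem_of_mem_erase hc)
  have hcard : (insert q (A.1.erase p)).card = K := by
    rw [Finset.card_insert_of_notMem hqe, Finset.card_erase_of_mem hp, A.2]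
    have : 0 < K := by rw [← A.2]; exact Finset.card_pos.mpr ⟨p, hp⟩
    omega
  refine ⟨⟨insert q (A.1.erase p), hcard⟩, ?_⟩
  rw [Finset.sum_insert hqe]
  have := Finset.sum_erase_add A.1 δ hp
  have h2 : ∑ x ∈ A.1.erase p, δ x = (∑ x ∈ A.1, δ x) - δ p := by linarith
  rw [h2]; ring

end AuxLemmas
set_option maxHeartbeats 1000000

/-- in a non-degenerate "ordinary" Capped-Guesses game
(`λK + ∑_{j<J}C_j|E_j| > C_J ∑_{j<J}|E_j|` strictly), the picker's strategy in every mixed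
Nash equilibrium is the uniform distribution on `∪_{i≤J} E i`. -/
theorem capped_NE_picker_unique
    (E : Fin N → Finset P) (C : Fin N → ℝ) (lam gam : ℝ) (K : ℕ)
    (h : CappedHyp P E C lam gam K)
    (hord : Ordinary E C lam K h.hN)
    (hnondeg : C (Jidx E C lam K h.hN) *
        (∑ i ∈ univ.filter (· < Jidx E C lam K h.hN), ((E i).card : ℝ)) <
      lam * K + ∑ i ∈ univ.filter (· < Jidx E C lam K h.hN), C i * ((E i).card : ℝ))
    (δ : P → ℝ) (α : GA P K → ℝ) (hNE : IsNE E C lam gam K δ α) :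
    δ = fun p => if p ∈ (univ.filter (· ≤ Jidx E C lam K h.hN)).biUnion E
      then 1 / Ssum E (Jidx E C lam K h.hN) else 0 := by
  classical
  have hlam := h.lam_pos
  have hgam := h.gam_pos
  obtain ⟨⟨hδ0, hδ1⟩, ⟨hα0, hα1⟩, hD, hG⟩ := hNE
  set J : Fin N := Jidx E C lam K h.hN with hJdef
  set U : Finset P := (univ.filter (· ≤ J)).biUnion E with hUdef
  -- J is a member of Jset and is its maximum
  have hJmem : J ∈ Jset E C lam K := by
    rw [hJdef]; simp only [Jidx]; rw [dif_pos hord.1]; exact Finset.max'_mem _ _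
  have hJmax : ∀ j ∈ Jset E C lam K, j ≤ J := by
    intro j hj
    rw [hJdef]; simp only [Jidx]; rw [dif_pos hord.1]; exact Finset.le_max' _ _ hj
  simp only [Jset, Finset.mem_filter, Finset.mem_univ, true_and] at hJmem
  obtain ⟨hKJ, hCJle⟩ := hJmem
  -- Ssum positivity
  have hS0 : 0 < Ssum E J := by
    rw [Ssum]
    refine Finset.sum_pos' (fun i _ => by positivity) ⟨J, by simp, ?_⟩
    exact_mod_cast Finset.card_pos.mpr (h.nonemp J)
  set wst : ℝ := (CSsum E C J + lam * K) / Ssum E J with hwstdef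
  have hSw : Ssum E J * wst = CSsum E C J + lam * K := by
    rw [hwstdef, mul_div_cancel₀ _ hS0.ne']
  -- splitting the sums at J
  have hfilter_split : (univ.filter (· ≤ J) : Finset (Fin N)) = insert J (univ.filter (· < J)) := by
    ext i
    simp only [Finset.mem_insert, Finset.mem_filter, Finset.mem_univ, true_and]
    constructor
    · intro hi
      rcases eq_or_lt_of_le hi with h' | h'
      · exact Or.inl h'
      · exact Or.inr h'
    · rintro (rfl | hi)
      · exact le_refl _
      · exact le_of_lt hi
  have hJnotmem : J ∉ univ.filter (· < J) := by simp
  have hSsum_split : Ssum E J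
      = ((E J).card : ℝ) + ∑ i ∈ univ.filter (· < J), ((E i).card : ℝ) := by
    rw [Ssum, hfilter_split, Finset.sum_insert hJnotmem]
  have hCSsum_split : CSsum E C J
      = C J * ((E J).card : ℝ) + ∑ i ∈ univ.filter (· < J), C i * ((E i).card : ℝ) := by
    rw [CSsum, hfilter_split, Finset.sum_insert hJnotmem]
  -- C J < wst
  have hCJwst : C J < wst := by
    by_contra hcon
    push_neg at hcon
    have h2 : Ssum E J * wst ≤ Ssum E J * C J := mul_le_mul_of_nonneg_left hcon hS0.le
    rw [hSw, hSsum_split, hCSsum_split] at h2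
    nlinarith [hnondeg]
  have hC0le : ∀ i : Fin N, C ⟨0, h.hN⟩ ≤ C i := by
    intro i
    exact h.C_mono.monotone (by simp [Fin.le_def])
  have hC0wst : C ⟨0, h.hN⟩ < wst := lt_of_le_of_lt (hC0le J) hCJwst
  have hwstlam : wst < C ⟨0, h.hN⟩ + lam := by
    have h2 := hord.2
    rw [← hJdef, ← hwstdef] at h2
    exact h2
  -- costs above J exceed wst
  have hhigh : ∀ i : Fin N, J < i → wst < C i := by
    intro i hi
    have hTne : (univ.filter (fun j => J < j) : Finset (Fin N)).Nonempty := ⟨i, by simp [hi]⟩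
    set i₀ := (univ.filter (fun j => J < j)).min' hTne with hi₀def
    have hi₀mem : J < i₀ := by
      have := Finset.min'_mem (univ.filter (fun j => J < j)) hTne
      simp only [Finset.mem_filter, Finset.mem_univ, true_and] at this
      exact this
    have hi₀le : i₀ ≤ i := Finset.min'_le _ _ (by simp [hi])
    have hfeq : (univ.filter (· < i₀) : Finset (Fin N)) = univ.filter (· ≤ J) := by
      ext j
      simp only [Finset.mem_filter, Finset.mem_univ, true_and]
      constructor
      · intro hj
        by_contra hcon
        push_neg at hcon
        exact absurd (Finset.min'_le _ j (by simp [hcon])) (not_le.mpr hj)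
      · intro hj
        exact lt_of_le_of_lt hj hi₀mem
    have hi₀not : i₀ ∉ Jset E C lam K := by
      intro hc
      exact absurd (hJmax i₀ hc) (not_le.mpr hi₀mem)
    simp only [Jset, Finset.mem_filter, Finset.mem_univ, true_and] at hi₀not
    push_neg at hi₀not
    have hfirst : K < ∑ j ∈ univ.filter (· < i₀), (E j).card := by
      rw [hfeq]
      calc K < ∑ j ∈ univ.filter (· < J), (E j).card := hKJ
        _ ≤ _ := Finset.sum_le_sum_of_subset (by
            intro x hx
            simp only [Finset.mem_filter, Finset.mem_univ, true_and] at hx ⊢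
            exact le_of_lt hx)
    have hsecond := hi₀not hfirst
    rw [hfeq] at hsecond
    have hlt : Ssum E J * wst < C i₀ * Ssum E J := by
      rw [hSw, Ssum, CSsum]
      linarith [hsecond]
    have hwsti₀ : wst < C i₀ := by
      rw [mul_comm (C i₀)] at hlt
      exact (mul_lt_mul_iff_right₀ hS0).mp hlt
    rcases eq_or_lt_of_le hi₀le with rfl | h'
    · exact hwsti₀
    · exact lt_trans hwsti₀ (h.C_mono h')
  -- the universe as a disjoint union of blocks
  have huniv : (univ : Finset P) = (univ : Finset (Fin N)).biUnion E := by
    ext p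
    simpa using h.cover p
  -- the G-function value at wst
  have hGwst : ∑ p, max 0 (wst - cost E C p) = lam * K := by
    rw [huniv, Finset.sum_biUnion (fun i _ j _ hij => h.disj i j hij)]
    have hblock : ∀ i : Fin N, ∑ p ∈ E i, max 0 (wst - cost E C p)
        = ((E i).card : ℝ) * max 0 (wst - C i) := by
      intro i
      rw [Finset.sum_congr rfl fun p hp => by rw [cost_eq E C h.disj hp], Finset.sum_const,
        nsmul_eq_mul]
    rw [Finset.sum_congr rfl fun i _ => hblock i,
      ← Finset.sum_filter_add_sum_filter_not univ (· ≤ J)]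
    have hin : ∀ i ∈ univ.filter (· ≤ J),
        ((E i).card : ℝ) * max 0 (wst - C i) = ((E i).card : ℝ) * wst - C i * ((E i).card : ℝ) := by
      intro i hi
      have hiJ : i ≤ J := (Finset.mem_filter.mp hi).2
      have hlt : C i < wst := lt_of_le_of_lt (h.C_mono.monotone hiJ) hCJwst
      rw [max_eq_right (by linarith)]
      ring
    have hout : ∀ i ∈ univ.filter (fun i => ¬ i ≤ J),
        ((E i).card : ℝ) * max 0 (wst - C i) = 0 := by
      intro i hi
      have hiJ : J < i := lt_of_not_ge (Finset.mem_filter.mp hi).2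
      have := hhigh i hiJ
      rw [max_eq_left (by linarith), mul_zero]
    rw [Finset.sum_congr rfl hin, Finset.sum_congr rfl hout, Finset.sum_const_zero, add_zero,
      Finset.sum_sub_distrib, ← Finset.sum_mul]
    have h2 := hSw
    rw [Ssum, CSsum] at h2
    linarith
  -- basic facts about the marginal
  have hρ0 : ∀ p, 0 ≤ marg K α p := marg_nonneg K α hα0
  have hρ1 : ∀ p, marg K α p ≤ 1 := marg_le_one K α hα0 hα1 
  have hρK : ∑ p, marg K α p = K := marg_sum K α hα1
  -- the picker's equilibrium cost
  set w : ℝ := ∑ d, δ d * (cost E C d + lam * marg K α d) with hwdef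
  have hUDα : ∀ δ' : P → ℝ, UD E C lam K δ' α
      = ∑ d, δ' d * (-(cost E C d) - lam * marg K α d) := fun δ' => UD_eq E C lam K δ' α hα1
  have hUDδ : UD E C lam K δ α = -w := by
    rw [hUDα δ, hwdef, ← Finset.sum_neg_distrib]
    exact Finset.sum_congr rfl fun d _ => by ring
  have hwle : ∀ p, w ≤ cost E C p + lam * marg K α p := by
    intro p
    have hmem : (fun q => if q = p then (1:ℝ) else 0) ∈ simplexP P := by
      simp only [simplexP, Set.mem_setOf_eq]
      constructor
      · intro q
        split
        · exact zero_le_one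
        · exact le_refl 0
      · simp
    have hle := hD _ hmem
    rw [hUDδ, hUDα] at hle
    have heval : ∑ d, (if d = p then (1:ℝ) else 0) * (-(cost E C d) - lam * marg K α d)
        = -(cost E C p) - lam * marg K α p := by
      have hterm : ∀ d, (if d = p then (1:ℝ) else 0) * (-(cost E C d) - lam * marg K α d)
          = if d = p then -(cost E C d) - lam * marg K α d else 0 := by
        intro d; split <;> ring
      rw [Finset.sum_congr rfl fun d _ => hterm d, Finset.sum_ite_eq' univ p]
      simp
    rw [heval] at hle
    linarith
  have hw_supp : ∀ p, 0 < δ p → cost E C p + lam * marg K α p = w := by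
    intro p hp
    have hsum1 : ∑ d, δ d * (cost E C d + lam * marg K α d - w) = 0 := by
      have hterm : ∀ d, δ d * (cost E C d + lam * marg K α d - w)
          = δ d * (cost E C d + lam * marg K α d) - w * δ d := fun d => by ring
      rw [Finset.sum_congr rfl fun d _ => hterm d, Finset.sum_sub_distrib, ← Finset.mul_sum,
        hδ1, ← hwdef]
      ring
    have hterm := (Finset.sum_eq_zero_iff_of_nonneg
      (fun d _ => mul_nonneg (hδ0 d) (by have := hwle d; linarith))).mp hsum1 p (Finset.mem_univ p)
    rcases mul_eq_zero.mp hterm with h' | h'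
    · exact absurd h' (ne_of_gt hp)
    · linarith
  -- the guesser's equilibrium value
  set V : ℝ := ∑ A : GA P K, α A * ∑ x ∈ A.1, δ x with hVdef
  have hUAα : ∀ α' : GA P K → ℝ, UA gam K δ α'
      = gam * ∑ A : GA P K, α' A * ∑ x ∈ A.1, δ x := fun α' => UA_eq gam K δ α'
  have hfV : ∀ A : GA P K, ∑ x ∈ A.1, δ x ≤ V := by
    intro A
    have hmem : (fun B => if B = A then (1:ℝ) else 0) ∈ simplexA P K := by
      simp only [simplexA, Set.mem_setOf_eq]
      constructor
      · intro B
        split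
        · exact zero_le_one
        · exact le_refl 0
      · simp
    have hle := hG _ hmem
    rw [hUAα, hUAα] at hle
    have heval : ∑ B : GA P K, (if B = A then (1:ℝ) else 0) * ∑ x ∈ B.1, δ x
        = ∑ x ∈ A.1, δ x := by
      have hterm : ∀ B : GA P K, (if B = A then (1:ℝ) else 0) * ∑ x ∈ B.1, δ x
          = if B = A then ∑ x ∈ B.1, δ x else 0 := by
        intro B; split <;> ring
      rw [Finset.sum_congr rfl fun B _ => hterm B, Finset.sum_ite_eq' univ A]
      simp
    rw [heval, ← hVdef] at hle
    exact le_of_mul_le_mul_left hle hgam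
  have hαV : ∀ A : GA P K, 0 < α A → ∑ x ∈ A.1, δ x = V := by
    intro A hA
    have hsum2 : ∑ B : GA P K, α B * (V - ∑ x ∈ B.1, δ x) = 0 := by
      have hterm : ∀ B : GA P K, α B * (V - ∑ x ∈ B.1, δ x)
          = V * α B - α B * ∑ x ∈ B.1, δ x := fun B => by ring
      rw [Finset.sum_congr rfl fun B _ => hterm B, Finset.sum_sub_distrib, ← Finset.mul_sum,
        hα1, ← hVdef]
      ring
    have hterm := (Finset.sum_eq_zero_iff_of_nonneg
      (fun B _ => mul_nonneg (hα0 B) (by have := hfV B; linarith))).mp hsum2 A (Finset.mem_univ A)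
    rcases mul_eq_zero.mp hterm with h' | h'
    · exact absurd h' (ne_of_gt hA)
    · linarith
  -- swap principle
  have hswap : ∀ A : GA P K, 0 < α A → ∀ p ∈ A.1, ∀ q, q ∉ A.1 → δ q ≤ δ p := by
    intro A hA p hp q hq
    by_contra hcon
    push_neg at hcon
    obtain ⟨A', hA'⟩ := swap_set K A hp hq δ
    have h1 : ∑ x ∈ A'.1, δ x ≤ V := hfV A'
    have h2 : ∑ x ∈ A.1, δ x = V := hαV A hA
    rw [hA', h2] at h1
    linarith
  -- positive marginal is witnessed
  have hρpos : ∀ p, 0 < marg K α p → ∃ A : GA P K, 0 < α A ∧ p ∈ A.1 := by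
    intro p hp
    by_contra hcon
    push_neg at hcon
    have hzero : marg K α p = 0 := by
      simp only [marg]
      refine Finset.sum_eq_zero fun A _ => ?_
      split
      · rename_i hmem
        by_contra hα'
        exact hcon A (lt_of_le_of_ne (hα0 A) (Ne.symm hα')) hmem
      · rfl
    linarith
  have hρlt : ∀ q, marg K α q < 1 → ∃ A : GA P K, 0 < α A ∧ q ∉ A.1 := by
    intro q hq
    by_contra hcon
    push_neg at hcon
    have hone : marg K α q = 1 := by
      simp only [marg]
      rw [← hα1]
      refine Finset.sum_congr rfl fun A _ => ?_
      split
      · rfl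
      · rename_i hmem
        rcases eq_or_lt_of_le (hα0 A) with h' | h'
        · exact h'
        · exact absurd (hcon A h') hmem
    linarith
  -- w ≤ wst
  have hmaxle : ∀ p, max 0 (w - cost E C p) ≤ lam * marg K α p := by
    intro p
    refine max_le (mul_nonneg hlam.le (hρ0 p)) ?_
    have := hwle p
    linarith
  have hwwst : w ≤ wst := by
    by_contra hcon
    push_neg at hcon
    obtain ⟨p₀, hp₀⟩ := h.nonemp ⟨0, h.hN⟩
    have hc₀ : cost E C p₀ = C ⟨0, h.hN⟩ := cost_eq E C h.disj hp₀
    have hlt : ∑ p, max 0 (wst - cost E C p) < ∑ p, max 0 (w - cost E C p) := by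
      refine Finset.sum_lt_sum (fun p _ => max_le_max (le_refl 0) (by linarith))
        ⟨p₀, Finset.mem_univ p₀, ?_⟩
      rw [hc₀, max_eq_right (by linarith : (0:ℝ) ≤ wst - C ⟨0, h.hN⟩)]
      have h2 : w - C ⟨0, h.hN⟩ ≤ max 0 (w - C ⟨0, h.hN⟩) := le_max_right _ _
      linarith
    have h3 : ∑ p, max 0 (w - cost E C p) ≤ ∑ p, lam * marg K α p :=
      Finset.sum_le_sum fun p _ => hmaxle p
    rw [← Finset.mul_sum, hρK] at h3
    rw [hGwst] at hlt
    linarith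
  -- the support of δ has more than K elements
  have hbig : ¬ ((univ.filter fun p => 0 < δ p).card ≤ K) := by
    intro hle
    obtain ⟨B, hsubB, hBcard⟩ := Finset.exists_superset_card_eq hle h.K_lt.le
    have hBsum : ∑ x ∈ B, δ x = 1 := by
      rw [← hδ1]
      refine Finset.sum_subset (Finset.subset_univ B) fun x _ hx => ?_
      by_contra hne
      have hxpos : 0 < δ x := lt_of_le_of_ne (hδ0 x) (Ne.symm hne)
      exact hx (hsubB (Finset.mem_filter.mpr ⟨Finset.mem_univ x, hxpos⟩))
    have hf1 : ∀ A : GA P K, ∑ x ∈ A.1, δ x ≤ 1 := by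
      intro A
      rw [← hδ1]
      exact Finset.sum_le_sum_of_subset_of_nonneg (Finset.subset_univ _) fun x _ _ => hδ0 x
    have hV1 : V = 1 := by
      have hle1 : V ≤ 1 := by
        rw [hVdef, ← hα1]
        refine Finset.sum_le_sum fun A _ => ?_
        calc α A * ∑ x ∈ A.1, δ x ≤ α A * 1 := mul_le_mul_of_nonneg_left (hf1 A) (hα0 A)
          _ = α A := mul_one _
      have hge1 : (1:ℝ) ≤ V := by
        have h2 := hfV ⟨B, hBcard⟩
        have hfB : ∑ x ∈ (⟨B, hBcard⟩ : GA P K).1, δ x = 1 := hBsum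
        linarith
      linarith
    have hex : ∃ p₁, 0 < δ p₁ := by
      by_contra hcon
      push_neg at hcon
      have hzero : ∑ p, δ p = 0 := Finset.sum_eq_zero fun p _ => le_antisymm (hcon p) (hδ0 p)
      rw [hδ1] at hzero
      norm_num at hzero
    obtain ⟨p₁, hp₁⟩ := hex
    have hρp₁ : marg K α p₁ = 1 := by
      by_contra hne
      have hlt1 : marg K α p₁ < 1 := lt_of_le_of_ne (hρ1 p₁) hne
      obtain ⟨A₀, hA₀pos, hA₀nm⟩ := hρlt p₁ hlt1
      have hfA₀ : ∑ x ∈ A₀.1, δ x = V := hαV A₀ hA₀pos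
      have hsums : ∑ x ∈ A₀.1, δ x = ∑ x ∈ univ, δ x := by
        rw [hfA₀, hV1, hδ1]
      have hstrict := Finset.sum_lt_sum_of_subset (Finset.subset_univ A₀.1)
        (Finset.mem_univ p₁) hA₀nm hp₁ (fun y _ _ => hδ0 y)
      linarith
    have hwp₁ := hw_supp p₁ hp₁
    obtain ⟨i, hi⟩ := h.cover p₁
    have hcp₁ : cost E C p₁ = C i := cost_eq E C h.disj hi
    have hC0i := hC0le i
    rw [hρp₁, hcp₁] at hwp₁
    linarith
  -- positive marginal implies positive δ
  have hρδ : ∀ p, 0 < marg K α p → 0 < δ p := by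
    intro p hρp
    by_contra hcon
    push_neg at hcon
    have hδp : δ p = 0 := le_antisymm hcon (hδ0 p)
    obtain ⟨A, hApos, hpA⟩ := hρpos p hρp
    have hsub : univ.filter (fun q => 0 < δ q) ⊆ A.1 := by
      intro q hq
      have hq' : 0 < δ q := (Finset.mem_filter.mp hq).2
      by_contra hqA
      have hle := hswap A hApos p hpA q hqA
      rw [hδp] at hle
      linarith
    have hcard := Finset.card_le_card hsub
    rw [A.2] at hcard
    exact hbig hcard
  -- exact formula for the marginal
  have hρeq : ∀ p, lam * marg K α p = max 0 (w - cost E C p) := by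
    intro p
    rcases eq_or_lt_of_le (hρ0 p) with h0 | h0
    · have hwp := hwle p
      rw [← h0, mul_zero] at hwp ⊢
      rw [max_eq_left (by linarith)]
    · have hδp := hρδ p h0
      have heq := hw_supp p hδp
      rw [max_eq_right (by nlinarith [mul_pos hlam h0] : (0:ℝ) ≤ w - cost E C p)]
      linarith
  -- w = wst
  have hweq : w = wst := by
    rcases eq_or_lt_of_le hwwst with h' | h'
    · exact h'
    · exfalso
      have hsumw : ∑ p, max 0 (w - cost E C p) = lam * K := by
        rw [← Finset.sum_congr rfl fun p _ => hρeq p, ← Finset.mul_sum, hρK]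
      obtain ⟨p₀, hp₀⟩ := h.nonemp ⟨0, h.hN⟩
      have hc₀ : cost E C p₀ = C ⟨0, h.hN⟩ := cost_eq E C h.disj hp₀
      have hlt : ∑ p, max 0 (w - cost E C p) < ∑ p, max 0 (wst - cost E C p) := by
        refine Finset.sum_lt_sum (fun p _ => max_le_max (le_refl 0) (by linarith))
          ⟨p₀, Finset.mem_univ p₀, ?_⟩
        rw [hc₀, max_eq_right (by linarith : (0:ℝ) ≤ wst - C ⟨0, h.hN⟩)]
        exact max_lt (by linarith) (by linarith)
      rw [hsumw, hGwst] at hlt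
      linarith
  -- δ vanishes outside U
  have hout : ∀ q, q ∉ U → δ q = 0 := by
    intro q hq
    obtain ⟨i, hi⟩ := h.cover q
    have hiJ : J < i := by
      by_contra hcon
      push_neg at hcon
      exact hq (Finset.mem_biUnion.mpr ⟨i, Finset.mem_filter.mpr ⟨Finset.mem_univ i, hcon⟩, hi⟩)
    have hci : cost E C q = C i := cost_eq E C h.disj hi
    by_contra hne
    have hpos : 0 < δ q := lt_of_le_of_ne (hδ0 q) (Ne.symm hne)
    have heq := hw_supp q hpos
    rw [hci, hweq] at heq
    have h2 := hhigh i hiJ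
    linarith [mul_nonneg hlam.le (hρ0 q)]
  -- inside U : positive δ and marginal strictly below 1
  have hUin : ∀ q ∈ U, 0 < marg K α q ∧ marg K α q < 1 := by
    intro q hq
    obtain ⟨i, hi', hqi⟩ := Finset.mem_biUnion.mp hq
    have hiJ : i ≤ J := (Finset.mem_filter.mp hi').2
    have hci : cost E C q = C i := cost_eq E C h.disj hqi
    have hCi : C i < wst := lt_of_le_of_lt (h.C_mono.monotone hiJ) hCJwst
    have heq := hρeq q
    rw [hweq, hci, max_eq_right (by linarith)] at heq
    constructor
    · rcases (hρ0 q).lt_or_eq with h' | h'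
      · exact h'
      · exfalso
        rw [← h', mul_zero] at heq
        linarith
    · have hlt2 : lam * marg K α q < lam * 1 := by
        rw [mul_one]
        have := hC0le i
        linarith
      exact (mul_lt_mul_iff_right₀ hlam).mp hlt2
  -- δ is constant on U
  have hclaim : ∀ a ∈ U, ∀ b ∈ U, δ a < δ b → False := by
    intro a ha b hb hab
    obtain ⟨hρa, _⟩ := hUin a ha
    obtain ⟨_, hρb1⟩ := hUin b hb
    obtain ⟨A₁, hA₁pos, haA₁⟩ := hρpos a hρa
    obtain ⟨A₀, hA₀pos, hbA₀⟩ := hρlt b hρb1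
    by_cases haA₀ : a ∈ A₀.1
    · exact absurd (hswap A₀ hA₀pos a haA₀ b hbA₀) (not_le.mpr hab)
    · have hbA₁ : b ∈ A₁.1 := by
        by_contra hc
        exact absurd (hswap A₁ hA₁pos a haA₁ b hc) (not_le.mpr hab)
      have hcard : (A₀.1 \ A₁.1).card = (A₁.1 \ A₀.1).card :=
        Finset.card_sdiff_comm (A₀.2.trans A₁.2.symm)
      have hne : (A₀.1 \ A₁.1).Nonempty := by
        rw [← Finset.card_pos, hcard]
        exact Finset.card_pos.mpr ⟨b, Finset.mem_sdiff.mpr ⟨hbA₁, hbA₀⟩⟩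
      obtain ⟨r, hr⟩ := hne
      obtain ⟨hrA₀, hrA₁⟩ := Finset.mem_sdiff.mp hr
      have h1 : δ b ≤ δ r := hswap A₀ hA₀pos r hrA₀ b hbA₀
      have h2 : δ r ≤ δ a := hswap A₁ hA₁pos a haA₁ r hrA₁
      linarith
  -- conclude
  have hUcard : (U.card : ℝ) = Ssum E J := by
    rw [hUdef, Finset.card_biUnion (fun i _ j _ hij => h.disj i j hij), Ssum, Nat.cast_sum]
  have hUsum : ∑ q ∈ U, δ q = 1 := by
    rw [← hδ1]
    exact (Finset.sum_subset (Finset.subset_univ U) fun x _ hx => hout x hx)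
  funext p
  by_cases hpU : p ∈ U
  · rw [if_pos hpU]
    have hconst : ∀ q ∈ U, δ q = δ p := by
      intro q hq
      rcases lt_trichotomy (δ q) (δ p) with h' | h' | h'
      · exact (hclaim q hq p hpU h').elim
      · exact h'
      · exact (hclaim p hpU q hq h').elim
    have hsum3 : ∑ q ∈ U, δ q = (U.card : ℝ) * δ p := by
      rw [Finset.sum_congr rfl hconst, Finset.sum_const, nsmul_eq_mul]
    rw [hUsum, hUcard] at hsum3
    rw [eq_div_iff hS0.ne']
    linarith
  · rw [if_neg hpU]
    exact hout p hpU
end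
end

section
/- Uniform randomization over a larger set never helps the guesser: if E and E' are nonempty subsets of the finite secret set 𝒫 with |E| ≤ |E'|, then the maximum over all duplicate-free lists A of elements of 𝒫 of u_A(unif(E),A) is at least the maximum over all such lists A of u_A(unif(E'),A). -/
open Finset

noncomputable section

variable {P : Type*} [DecidableEq P]

/-- Guesser's expected utility of the duplicate-free list strategy `A = ⟨a_1,…,a_T⟩` against
the mixed picker strategy `δ`:
`u_A(δ,A) = γ ∑_{i=1}^{T} δ(a_i) − σ ∑_{i=1}^{T} (1 − ∑_{j=1}^{i-1} δ(a_j))`. -/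
def uAList (gam sig : ℝ) (δ : P → ℝ) (A : List P) : ℝ :=
  gam * (A.map δ).sum - sig * ∑ i ∈ Finset.range A.length, (1 - ((A.take i).map δ).sum)

/-- The uniform distribution on a finite set `E`. -/
def unif (E : Finset P) : P → ℝ :=
  fun p => if p ∈ E then 1 / (E.card : ℝ) else 0

lemma sum_map_unif (E : Finset P) (L : List P) :
    (L.map (unif E)).sum = ((L.filter (· ∈ E)).length : ℝ) / E.card := by
  induction L with
  | nil => simp
  | cons a L ih =>
    by_cases h : a ∈ E <;>
      simp [List.filter_cons, h, ih, unif] <;> push_cast <;> ring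

lemma sum_range_cast (k : ℕ) : (∑ i ∈ Finset.range k, (i:ℝ)) = k * ((k:ℝ) - 1) / 2 := by
  induction k with
  | zero => simp
  | succ n ih => rw [Finset.sum_range_succ, ih]; push_cast; ring

lemma quad_bound (gam sig x N : ℝ) (hsig : 0 < sig) (hx : 0 ≤ x) (hxN : x ≤ N)
    (hN : 0 < N) :
    gam * x / N - sig * (x - x * (x - 1) / (2 * N)) ≤ max 0 (gam - sig * (N + 1) / 2) := by
  have key : gam * x / N - sig * (x - x * (x - 1) / (2 * N))
      ≤ x / N * (gam - sig * (N + 1) / 2) := by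
    have e : x / N * (gam - sig * (N + 1) / 2)
        - (gam * x / N - sig * (x - x * (x - 1) / (2 * N)))
        = sig * x * (N - x) / (2 * N) := by field_simp; ring
    have hpos : 0 ≤ sig * x * (N - x) / (2 * N) :=
      div_nonneg (mul_nonneg (mul_nonneg hsig.le hx) (sub_nonneg.mpr hxN)) (by positivity)
    linarith
  rcases le_or_gt (gam - sig * (N + 1) / 2) 0 with h | h
  · have : x / N * (gam - sig * (N + 1) / 2) ≤ 0 :=
      mul_nonpos_of_nonneg_of_nonpos (by positivity) h
    exact le_trans key (le_trans this (le_max_left _ _))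
  · have hxN1 : x / N ≤ 1 := (div_le_one hN).mpr hxN
    have : x / N * (gam - sig * (N + 1) / 2) ≤ 1 * (gam - sig * (N + 1) / 2) :=
      mul_le_mul_of_nonneg_right hxN1 h.le
    refine le_trans key (le_trans this ?_)
    rw [one_mul]; exact le_max_right _ _

lemma uAList_le_max (gam sig : ℝ) (hsig : 0 < sig) (E' : Finset P) (hE' : E'.Nonempty)
    (A : List P) (hA : A.Nodup) :
    uAList gam sig (unif E') A ≤ max 0 (gam - sig * ((E'.card : ℝ) + 1) / 2) := by
  set N : ℝ := (E'.card : ℝ) with hNdef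
  have hN : (0:ℝ) < N := by rw [hNdef]; exact_mod_cast hE'.card_pos
  set T := A.length with hT
  set k := (A.filter (· ∈ E')).length with hk
  -- bounds on counts
  have hfilter_card : ∀ L : List P, L.Nodup → (L.filter (· ∈ E')).length ≤ E'.card := by
    intro L hL
    have hnd : (L.filter (· ∈ E')).Nodup := hL.filter _
    rw [← List.toFinset_card_of_nodup hnd]
    apply Finset.card_le_card
    intro a ha
    have := List.mem_toFinset.mp ha
    simpa using (List.mem_filter.mp this).2
  have hkcard : k ≤ E'.card := hfilter_card A hA
  have hkT : k ≤ T := List.length_filter_le _ _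
  have hci_le : ∀ i : ℕ, ((A.take i).filter (· ∈ E')).length ≤ i := fun i =>
    le_trans (List.length_filter_le _ _) (by simpa using List.length_take_le i A)
  have hci_card : ∀ i : ℕ, ((A.take i).filter (· ∈ E')).length ≤ E'.card := fun i =>
    hfilter_card _ (hA.sublist (List.take_sublist i A))
  -- rewrite sums
  have hgain : (A.map (unif E')).sum = (k : ℝ) / N := sum_map_unif E' A
  have hcost : ∀ i : ℕ, ((A.take i).map (unif E')).sum
      = (((A.take i).filter (· ∈ E')).length : ℝ) / N := fun i => sum_map_unif E' _
  have hcost_ge : (∑ i ∈ Finset.range T, (1 - ((A.take i).map (unif E')).sum))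
      ≥ ∑ i ∈ Finset.range k, (1 - (i:ℝ) / N) := by
    have h1 : ∀ i ∈ Finset.range T, (0:ℝ) ≤ 1 - ((A.take i).map (unif E')).sum := by
      intro i _
      rw [hcost i]
      have : (((A.take i).filter (· ∈ E')).length : ℝ) / N ≤ 1 := by
        rw [div_le_one hN, hNdef]
        exact_mod_cast hci_card i
      linarith
    calc (∑ i ∈ Finset.range k, (1 - (i:ℝ) / N))
        ≤ ∑ i ∈ Finset.range k, (1 - ((A.take i).map (unif E')).sum) := by
          apply Finset.sum_le_sum
          intro i _
          rw [hcost i]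
          have : (((A.take i).filter (· ∈ E')).length : ℝ) / N ≤ (i:ℝ) / N := by
            gcongr
            exact_mod_cast hci_le i
          linarith
      _ ≤ ∑ i ∈ Finset.range T, (1 - ((A.take i).map (unif E')).sum) := by
          apply Finset.sum_le_sum_of_subset_of_nonneg
          · exact Finset.range_subset_range.mpr hkT
          · intro i hi _; exact h1 i hi
  have hsum_eq : ∑ i ∈ Finset.range k, (1 - (i:ℝ)/N)
      = (k:ℝ) - (k:ℝ) * ((k:ℝ) - 1) / (2 * N) := by
    rw [Finset.sum_sub_distrib, ← Finset.sum_div, sum_range_cast]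
    simp only [Finset.sum_const, Finset.card_range, nsmul_eq_mul, mul_one]
    ring
  have hxN : (k:ℝ) ≤ N := by rw [hNdef]; exact_mod_cast hkcard
  have hfinal := quad_bound gam sig (k:ℝ) N hsig (Nat.cast_nonneg k) hxN hN
  rw [uAList, hgain]
  have h5 := mul_le_mul_of_nonneg_left hcost_ge hsig.le
  rw [hsum_eq] at h5
  have h6 : gam * ((k:ℝ)/N) = gam * (k:ℝ) / N := by ring
  linarith

lemma val_toList (gam sig : ℝ) (E : Finset P) (hE : E.Nonempty) :
    uAList gam sig (unif E) E.toList = gam - sig * ((E.card : ℝ) + 1) / 2 := by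
  have hn : (0:ℝ) < E.card := by exact_mod_cast hE.card_pos
  have hc : 1 ≤ E.card := hE.card_pos
  have htake : ∀ i ∈ Finset.range E.toList.length,
      ((E.toList.take i).map (unif E)).sum = (i : ℝ) / E.card := by
    intro i hi
    rw [sum_map_unif]
    congr 2
    rw [List.filter_eq_self.mpr, List.length_take]
    · exact Nat.min_eq_left (le_of_lt (Finset.mem_range.mp hi))
    · intro a ha
      simpa using List.mem_of_mem_take ha
  have hfull : (E.toList.map (unif E)).sum = 1 := by
    rw [sum_map_unif, List.filter_eq_self.mpr]
    · rw [Finset.length_toList]; field_simp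
    · intro a ha; simpa using ha
  have hlen : E.toList.length = E.card := E.length_toList
  rw [uAList, hfull, Finset.sum_congr rfl (fun i hi => by rw [htake i hi])]
  rw [hlen]
  have h2 : (∑ i ∈ Finset.range E.card, (i:ℝ)) = E.card * ((E.card:ℝ) - 1) / 2 := by
    have h0 := Finset.sum_range_id_mul_two E.card
    have h3 := congrArg (fun k : ℕ => (k : ℝ)) h0
    push_cast [Nat.cast_sub hc] at h3
    linarith
  have hsum : ∑ i ∈ Finset.range E.card, ((1:ℝ) - i / E.card)
      = ((E.card : ℝ) + 1) / 2 := by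
    rw [Finset.sum_sub_distrib, ← Finset.sum_div, h2]
    simp only [Finset.sum_const, Finset.card_range, nsmul_eq_mul, mul_one]
    field_simp
    ring
  rw [hsum]; ring

/-- uniform randomization over a larger set never helps the guesser: if
`|E| ≤ |E'|` then the guesser's best achievable utility against `unif(E')` is at most his
best achievable utility against `unif(E)`. -/
theorem unif_bigger_never_helps (gam sig : ℝ) (hgam : 0 < gam) (hsig : 0 < sig)
    (E E' : Finset P) (hE : E.Nonempty) (hE' : E'.Nonempty) (hcard : E.card ≤ E'.card) :
    sSup {x | ∃ A : List P, A.Nodup ∧ x = uAList gam sig (unif E') A} ≤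
      sSup {x | ∃ A : List P, A.Nodup ∧ x = uAList gam sig (unif E) A} := by
  set S : Set ℝ := {x | ∃ A : List P, A.Nodup ∧ x = uAList gam sig (unif E) A} with hS
  have h0 : (0:ℝ) ∈ S := ⟨[], List.nodup_nil, by simp [uAList]⟩
  have hv : gam - sig * ((E.card : ℝ) + 1) / 2 ∈ S :=
    ⟨E.toList, E.nodup_toList, (val_toList gam sig E hE).symm⟩
  have hbdd : BddAbove S := by
    refine ⟨max 0 (gam - sig * ((E.card : ℝ) + 1) / 2), ?_⟩
    rintro x ⟨A, hA, rfl⟩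
    exact uAList_le_max gam sig hsig E hE A hA
  have hmax : max 0 (gam - sig * ((E'.card : ℝ) + 1) / 2) ≤ sSup S := by
    refine max_le (le_csSup hbdd h0) (le_trans ?_ (le_csSup hbdd hv))
    have : ((E.card : ℝ)) ≤ (E'.card : ℝ) := by exact_mod_cast hcard
    nlinarith
  have hne : (0:ℝ) ∈ {x | ∃ A : List P, A.Nodup ∧ x = uAList gam sig (unif E') A} :=
    ⟨[], List.nodup_nil, by simp [uAList]⟩
  apply csSup_le ⟨0, hne⟩
  rintro x ⟨A, hA, rfl⟩
  exact le_trans (uAList_le_max gam sig hsig E' hE' A hA) hmax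
end
end

section
/- Padding improvement: let δ∈Δ(𝒫), let A be a duplicate-free list of elements of 𝒫, and let b, b' be distinct elements of 𝒫 not appearing in A with δ(b')=δ(b). Let A' be obtained from A by inserting b at some position, and A'' be obtained from A' by inserting b' immediately before b. If u_A(δ,A') ≥ u_A(δ,A), then u_A(δ,A'') ≥ u_A(δ,A'), and the latter inequality is strict if δ(b) > 0. -/
open Finset

noncomputable section

variable {P : Type*} [DecidableEq P]

lemma insertIdx_eq_take_cons_drop (x : P) :
    ∀ (k : ℕ) (l : List P), k ≤ l.length →
      l.insertIdx k x = l.take k ++ x :: l.drop k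
  | 0, l, _ => by simp
  | (k+1), [], h => by simp at h
  | (k+1), a :: l, h => by
    simp only [List.insertIdx_succ_cons, List.take_succ_cons, List.drop_succ_cons,
      List.cons_append]
    rw [insertIdx_eq_take_cons_drop x k l (by simpa using h)]

lemma uAList_cons (gam sig : ℝ) (δ : P → ℝ) (a : P) (L : List P) :
    uAList gam sig δ (a :: L) =
      uAList gam sig δ L + gam * δ a - sig + sig * L.length * δ a := by
  simp only [uAList, List.map_cons, List.sum_cons, List.length_cons]
  rw [Finset.sum_range_succ']
  simp only [List.take_succ_cons, List.map_cons, List.sum_cons, List.take_zero,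
    List.map_nil, List.sum_nil]
  have : ∀ i ∈ Finset.range L.length,
      (1 : ℝ) - (δ a + ((L.take i).map δ).sum)
        = (1 - ((L.take i).map δ).sum) - δ a := by intro i _; ring
  rw [Finset.sum_congr rfl this, Finset.sum_sub_distrib, Finset.sum_const,
    Finset.card_range, nsmul_eq_mul]
  ring

lemma uAList_middle (gam sig : ℝ) (δ : P → ℝ) (x : P) (T D : List P) :
    uAList gam sig δ (T ++ x :: D) =
      uAList gam sig δ (T ++ D) + gam * δ x - sig * (1 - ((T.map δ).sum))
        + sig * D.length * δ x := by
  induction T with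
  | nil => simp [uAList_cons]
  | cons a T ih =>
    simp only [List.cons_append, uAList_cons, ih, List.length_append, List.length_cons,
      List.map_cons, List.sum_cons, Nat.cast_add, Nat.cast_one]
    push_cast
    ring

/-- padding improvement. If inserting `b` (fresh for `A`) at position `k` of a
duplicate-free list `A` improves the guesser's utility, then additionally inserting `b'`
(also fresh, distinct from `b`, with `δ(b') = δ(b)`) immediately before `b` improves it
further, strictly so if `δ(b) > 0`. -/
theorem uAList_padding [Fintype P] (gam sig : ℝ) (hgam : 0 < gam) (hsig : 0 < sig)
    (δ : P → ℝ) (hδ : δ ∈ simplexP P)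
    (A : List P) (hnd : A.Nodup) (b b' : P) (hbb' : b ≠ b')
    (hb : b ∉ A) (hb' : b' ∉ A) (hδbb' : δ b' = δ b)
    (k : ℕ) (hk : k ≤ A.length)
    (himp : uAList gam sig δ A ≤ uAList gam sig δ (A.insertIdx k b)) :
    uAList gam sig δ (A.insertIdx k b) ≤
        uAList gam sig δ ((A.insertIdx k b).insertIdx k b') ∧
    (0 < δ b → uAList gam sig δ (A.insertIdx k b) <
        uAList gam sig δ ((A.insertIdx k b).insertIdx k b')) := by
  have h1 : A.insertIdx k b = A.take k ++ b :: A.drop k :=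
    insertIdx_eq_take_cons_drop b k A hk
  have hk' : k ≤ (A.insertIdx k b).length := by
    rw [List.length_insertIdx, if_pos hk]; omega
  have hlen : (A.take k).length = k := by
    rw [List.length_take]; omega
  have htake : (A.insertIdx k b).take k = A.take k := by
    rw [h1, List.take_left' hlen]
  have hdrop : (A.insertIdx k b).drop k = b :: A.drop k := by
    rw [h1, List.drop_left' hlen]
  have h2 : (A.insertIdx k b).insertIdx k b'
      = A.take k ++ b' :: b :: A.drop k := by
    rw [insertIdx_eq_take_cons_drop b' k _ hk', htake, hdrop]
  have hA : A = A.take k ++ A.drop k := (List.take_append_drop k A).symm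
  have e1 := uAList_middle gam sig δ b (A.take k) (A.drop k)
  rw [List.take_append_drop, ← h1] at e1
  have e2 := uAList_middle gam sig δ b' (A.take k) (b :: A.drop k)
  rw [← h1, ← h2] at e2
  have hd : uAList gam sig δ (A.insertIdx k b) - uAList gam sig δ A =
      gam * δ b - sig * (1 - ((A.take k).map δ).sum)
        + sig * (A.drop k).length * δ b := by rw [e1]; ring
  have hd2 : uAList gam sig δ ((A.insertIdx k b).insertIdx k b')
      - uAList gam sig δ (A.insertIdx k b)
      = (uAList gam sig δ (A.insertIdx k b) - uAList gam sig δ A) + sig * δ b := by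
    rw [e2, hd, hδbb', List.length_cons]
    push_cast
    ring
  have hδb : 0 ≤ δ b := hδ.1 b
  constructor
  · nlinarith
  · intro hpos; nlinarith
end
end
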